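/- Let I be a compact interval in ℝ and f : I → I a continuous map. If there exist a fixed point z of f and a point c ∈ I with c ≠ z such that (f(c) − z)/(c − z) > 1 and z belongs to the ω-limit set ω_f(c), then f is turbulent on I and has periodic points of all periods m ≥ 1. -/

import Mathlib

open Filter Set Function

/-- `J` is a compact subinterval of `I`. -/
def IsCompactSubinterval (J I : Set ℝ) : Prop :=
  J ⊆ I ∧ ∃ p q : ℝ, p ≤ q ∧ J = Set.Icc p q

/-- `g` is turbulent on the compact interval `J`: there are compact subintervals
`J₀`, `J₁` of `J` with at most one point in common with `g(J₀) ∩ g(J₁) ⊇ J₀ ∪ J₁`. -/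
def TurbulentOn (g : ℝ → ℝ) (J : Set ℝ) : Prop :=
  ∃ J₀ J₁ : Set ℝ, IsCompactSubinterval J₀ J ∧ IsCompactSubinterval J₁ J ∧
    (J₀ ∩ J₁).Subsingleton ∧ J₀ ∪ J₁ ⊆ g '' J₀ ∩ g '' J₁

/-- `g` is doubly turbulent on `I`: it is turbulent on two compact subintervals
of `I` having at most one point in common. -/
def DoublyTurbulentOn (g : ℝ → ℝ) (I : Set ℝ) : Prop :=
  ∃ K L : Set ℝ, IsCompactSubinterval K I ∧ IsCompactSubinterval L I ∧
    (K ∩ L).Subsingleton ∧ TurbulentOn g K ∧ TurbulentOn g L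

/-- `y` is a periodic point of `f` of (least) period `m`. -/
def PeriodicPtOfPeriod (f : ℝ → ℝ) (m : ℕ) (y : ℝ) : Prop :=
  f^[m] y = y ∧ ∀ j : ℕ, 0 < j → j < m → f^[j] y ≠ y

/-- `x` is a chain recurrent point of `f : I → I`. -/
def ChainRecurrentPt (f : ℝ → ℝ) (I : Set ℝ) (x : ℝ) : Prop :=
  x ∈ I ∧ ∀ ε : ℝ, 0 < ε → ∃ n : ℕ, 1 ≤ n ∧ ∃ xs : ℕ → ℝ,
    (∀ i ≤ n, xs i ∈ I) ∧ xs 0 = x ∧ xs n = x ∧ ∀ i < n, |f (xs i) - xs (i + 1)| < ε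

/-- `z` belongs to the ω-limit set of `c` under `f`, i.e. `z` is a limit point of
the sequence `(f^[n] c)`. -/
def OmegaLimitPt (f : ℝ → ℝ) (c z : ℝ) : Prop :=
  ∃ φ : ℕ → ℕ, StrictMono φ ∧ Filter.Tendsto (fun i => f^[φ i] c) Filter.atTop (nhds z)

/-- The sets `K` and `L` lie on opposite sides of the point `z`. -/
def OppositeSides (K L : Set ℝ) (z : ℝ) : Prop :=
  ((∀ x ∈ K, x < z) ∧ (∀ y ∈ L, z < y)) ∨ ((∀ x ∈ K, z < x) ∧ (∀ y ∈ L, y < z))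

/-!
Reflecting `x ↦ -x` if necessary, we may assume `z < c < f c`. Let `r` be the largest fixed
point of `f` in `[z, c]`, so that `f` moves every point of `(r, c]` to the right. As the orbit of
`c` returns arbitrarily close to `z ≤ r`, some point `d > c` is mapped to or below `r`; take the
first one. If the maximum of `f` on `[r, d]`, attained at `e`, were below `d`, the interval
`[r, f e]` would be invariant, and the orbit could only come back near `r` by jumping down from a
point to the right of `c`, hence to a value at least `min f` on `[c, f e]`, which exceeds `r`.
So `f r = r < e < d ≤ f e` and `f d ≤ r`: both `[r, e]` and `[e, d]` cover `[r, d]`, which is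
turbulence, and the itineraries `[e, d] → [r, e] → ⋯ → [r, e] → [e, d]` give periodic points of
every period.
-/

theorem Nat.exists_ge_and_not_succ {P : ℕ → Prop} {n m : ℕ} (hnm : n ≤ m) (hn : P n)
    (hm : ¬ P m) : ∃ k, n ≤ k ∧ P k ∧ ¬ P (k + 1) := by
  induction m, hnm using Nat.le_induction with
  | base => exact absurd hn hm
  | succ m hnm ih =>
    by_cases hPm : P m
    · exact ⟨m, hnm, hPm, hm⟩
    · exact ih hPm

theorem isCompact_Icc_inter_preimage {g : ℝ → ℝ} {p q : ℝ} {t : Set ℝ}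
    (hg : ContinuousOn g (Icc p q)) (ht : IsClosed t) : IsCompact (Icc p q ∩ g ⁻¹' t) :=
  isCompact_Icc.of_isClosed_subset (hg.preimage_isClosed_of_isClosed isClosed_Icc ht)
    inter_subset_left

section

variable {f : ℝ → ℝ}

theorem exists_Icc_image_eq_of_le {s t : ℝ} (hf : ContinuousOn f (Icc s t)) (hst : s ≤ t)
    (hfst : f s ≤ f t) :
    ∃ u v, s ≤ u ∧ u ≤ v ∧ v ≤ t ∧ f '' Icc u v = Icc (f s) (f t) := by
  obtain ⟨u, ⟨hu, hfu⟩, hu_max⟩ :=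
    (isCompact_Icc_inter_preimage hf isClosed_singleton).exists_isGreatest
      ⟨s, ⟨le_rfl, hst⟩, rfl⟩
  obtain ⟨v, ⟨hv, hfv⟩, hv_min⟩ :=
    (isCompact_Icc_inter_preimage (hf.mono (Icc_subset_Icc_left hu.1))
      isClosed_singleton).exists_isLeast ⟨t, ⟨hu.2, le_rfl⟩, rfl⟩
  simp only [mem_preimage, mem_singleton_iff] at hfu hfv
  have hfuv : ContinuousOn f (Icc u v) := hf.mono (Icc_subset_Icc hu.1 hv.2)
  refine ⟨u, v, hu.1, hv.1, hv.2, subset_antisymm ?_ ?_⟩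
  · rintro _ ⟨x, hx, rfl⟩
    constructor
    · by_contra! hx_lt
      have hux : u < x := hx.1.lt_of_ne (by rintro rfl; exact hx_lt.ne hfu)
      obtain ⟨w, hw, hfw⟩ := intermediate_value_Icc hx.2 (hfuv.mono (Icc_subset_Icc_left hx.1))
        ⟨hx_lt.le, hfv ▸ hfst⟩
      have := hu_max ⟨⟨hu.1.trans (hux.le.trans hw.1), hw.2.trans hv.2⟩, hfw⟩
      linarith [hw.1]
    · by_contra! hx_gt
      have hxv : x < v := hx.2.lt_of_ne (by rintro rfl; exact hx_gt.ne' hfv)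
      obtain ⟨w, hw, hfw⟩ := intermediate_value_Icc hx.1 (hfuv.mono (Icc_subset_Icc_right hx.2))
        ⟨hfu ▸ hfst, hx_gt.le⟩
      have := hv_min ⟨⟨hw.1, (hw.2.trans hxv.le).trans hv.2⟩, hfw⟩
      linarith [hw.2]
  · simpa only [hfu, hfv] using intermediate_value_Icc hv.1 hfuv

theorem exists_Icc_subset_image_eq {α β γ δ : ℝ} (hf : ContinuousOn f (Icc α β))
    (hγδ : γ ≤ δ) (hsub : Icc γ δ ⊆ f '' Icc α β) :
    ∃ u v, u ≤ v ∧ Icc u v ⊆ Icc α β ∧ f '' Icc u v = Icc γ δ := by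
  obtain ⟨s, hs, rfl⟩ := hsub (left_mem_Icc.2 hγδ)
  obtain ⟨t, ht, rfl⟩ := hsub (right_mem_Icc.2 hγδ)
  rcases le_total s t with hst | hts
  · obtain ⟨u, v, hsu, huv, hvt, himg⟩ :=
      exists_Icc_image_eq_of_le (hf.mono (Icc_subset_Icc hs.1 ht.2)) hst hγδ
    exact ⟨u, v, huv, Icc_subset_Icc (hs.1.trans hsu) (hvt.trans ht.2), himg⟩
  · have hcont : ContinuousOn (f ∘ Neg.neg) (Icc (-s) (-t)) :=
      hf.comp continuous_neg.continuousOn fun x hx =>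
        ⟨by linarith [hx.2, ht.1], by linarith [hx.1, hs.2]⟩
    obtain ⟨u, v, hsu, huv, hvt, himg⟩ :=
      exists_Icc_image_eq_of_le hcont (neg_le_neg hts) (by simpa using hγδ)
    refine ⟨-v, -u, neg_le_neg huv, Icc_subset_Icc (by linarith [ht.1]) (by linarith [hs.2]), ?_⟩
    rw [← image_neg_Icc, ← image_comp, himg]
    simp

theorem exists_Icc_itinerary {p q : ℕ → ℝ} (m : ℕ)
    (hf : ∀ j < m, ContinuousOn f (Icc (p j) (q j))) (hpq : p m ≤ q m)
    (hcov : ∀ j < m, Icc (p (j + 1)) (q (j + 1)) ⊆ f '' Icc (p j) (q j)) :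
    ∃ u v, u ≤ v ∧ (∀ j ≤ m, f^[j] '' Icc u v ⊆ Icc (p j) (q j)) ∧
      f^[m] '' Icc u v = Icc (p m) (q m) := by
  induction m generalizing p q with
  | zero => exact ⟨p 0, q 0, hpq, fun j hj => by simp [Nat.le_zero.1 hj], by simp⟩
  | succ m ih =>
    obtain ⟨u, v, huv, hits, himg⟩ := ih (p := fun j => p (j + 1)) (q := fun j => q (j + 1))
      (fun j hj => hf (j + 1) (by omega)) hpq (fun j hj => hcov (j + 1) (by omega))
    have hsub₁ : Icc u v ⊆ Icc (p 1) (q 1) := by simpa using hits 0 m.zero_le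
    obtain ⟨u', v', huv', hsub, himg'⟩ :=
      exists_Icc_subset_image_eq (hf 0 m.succ_pos) huv (hsub₁.trans (hcov 0 m.succ_pos))
    have hsucc : ∀ j, f^[j + 1] '' Icc u' v' = f^[j] '' Icc u v := by
      intro j; rw [iterate_succ, image_comp, himg']
    refine ⟨u', v', huv', fun j hj => ?_, by rw [hsucc]; exact himg⟩
    cases j with
    | zero => simpa using hsub
    | succ j => rw [hsucc]; exact hits j (by omega)

theorem exists_periodicPtOfPeriod_of_covers {I : Set ℝ} {r e d : ℝ} (hf : ContinuousOn f I)
    (hmaps : MapsTo f I I) (hsub : Icc r d ⊆ I) (hre : r ≤ e) (hed : e ≤ d) (hfe : e < f e)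
    (h₀ : Icc r d ⊆ f '' Icc r e) (h₁ : Icc r d ⊆ f '' Icc e d) (m : ℕ) :
    ∃ y ∈ Icc e d, PeriodicPtOfPeriod f m y := by
  -- the itinerary `[e, d] → [r, e] → ⋯ → [r, e] → [e, d]` of length `m`
  set p : ℕ → ℝ := fun j => if j = 0 ∨ j = m then e else r
  set q : ℕ → ℝ := fun j => if j = 0 ∨ j = m then d else e
  have hK : ∀ j, Icc (p j) (q j) ⊆ Icc r d := by
    intro j; simp only [p, q]; split_ifs
    exacts [Icc_subset_Icc_left hre, Icc_subset_Icc_right hed]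
  have hcov : ∀ j, Icc r d ⊆ f '' Icc (p j) (q j) := by
    intro j; simp only [p, q]; split_ifs; exacts [h₁, h₀]
  have hK₀ : Icc (p 0) (q 0) = Icc e d ∧ Icc (p m) (q m) = Icc e d := by simp [p, q]
  obtain ⟨u, v, huv, hits, himg⟩ := exists_Icc_itinerary m
    (fun j _ => hf.mono ((hK j).trans hsub)) (by simp [p, q, hed])
    (fun j _ => (hK (j + 1)).trans (hcov j))
  have huv_sub : Icc u v ⊆ Icc e d := by simpa [hK₀.1] using hits 0 m.zero_le
  obtain ⟨y, hy, hfy⟩ := exists_mem_Icc_isFixedPt_of_surjOn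
    ((hf.iterate hmaps m).mono (huv_sub.trans (Icc_subset_Icc_left hre |>.trans hsub))) huv
    (by rw [SurjOn, himg, hK₀.2]; exact huv_sub)
  have hmid : ∀ j, 0 < j → j < m → f^[j] y ∈ Icc r e := fun j hj0 hjm => by
    simpa [p, q, hj0.ne', hjm.ne] using hits j hjm.le (mem_image_of_mem _ hy)
  refine ⟨y, huv_sub hy, hfy, fun j hj0 hjm hjy => ?_⟩
  -- `y` would lie in `[r, e] ∩ [e, d] = {e}`, but `f e ∉ [r, e]`
  have hye : y = e := le_antisymm (hjy ▸ hmid j hj0 hjm).2 (huv_sub hy).1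
  have := (hmid 1 one_pos (by omega)).2
  rw [iterate_one, hye] at this
  exact this.not_gt hfe

theorem turbulentOn_of_covers {I : Set ℝ} {r e d : ℝ} (hsub : Icc r d ⊆ I) (hre : r ≤ e)
    (hed : e ≤ d) (h₀ : Icc r d ⊆ f '' Icc r e) (h₁ : Icc r d ⊆ f '' Icc e d) :
    TurbulentOn f I := by
  refine ⟨Icc r e, Icc e d, ⟨(Icc_subset_Icc_right hed).trans hsub, r, e, hre, rfl⟩,
    ⟨(Icc_subset_Icc_left hre).trans hsub, e, d, hed, rfl⟩, ?_, ?_⟩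
  · rw [Icc_inter_Icc_eq_singleton hre hed]; exact subsingleton_singleton
  · rw [Icc_union_Icc_eq_Icc hre hed]; exact subset_inter h₀ h₁

theorem OmegaLimitPt.frequently_lt {c z y : ℝ} (h : OmegaLimitPt f c z) (hzy : z < y) :
    ∃ᶠ n in atTop, f^[n] c < y := by
  obtain ⟨φ, hφ, hlim⟩ := h
  exact hφ.tendsto_atTop.frequently (hlim.eventually (gt_mem_nhds hzy)).frequently

theorem OmegaLimitPt.of_semiconj {g h : ℝ → ℝ} {c z : ℝ} (hfg : Semiconj h f g)
    (hh : Continuous h) (hz : OmegaLimitPt f c z) : OmegaLimitPt g (h c) (h z) := by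
  obtain ⟨φ, hφ, hlim⟩ := hz
  refine ⟨φ, hφ, ?_⟩
  convert (hh.tendsto z).comp hlim using 1
  exact funext fun i => ((hfg.iterate_right _).eq c).symm

theorem PeriodicPtOfPeriod.of_semiconj {g h : ℝ → ℝ} {m : ℕ} {y : ℝ} (hfg : Semiconj h f g)
    (hh : Injective h) (hy : PeriodicPtOfPeriod f m y) : PeriodicPtOfPeriod g m (h y) := by
  refine ⟨by rw [← (hfg.iterate_right m).eq, hy.1], fun j hj0 hjm hjy => ?_⟩
  rw [← (hfg.iterate_right j).eq] at hjy
  exact hy.2 j hj0 hjm (hh hjy)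

theorem exists_greatest_fixedPt {z c : ℝ} (hf : ContinuousOn f (Icc z c)) (hzc : z ≤ c)
    (hfz : f z = z) (hfc : c < f c) :
    ∃ r ∈ Ico z c, f r = r ∧ ∀ t ∈ Ioc r c, t < f t := by
  obtain ⟨r, ⟨hr, hfr⟩, hr_max⟩ :=
    (isCompact_Icc_inter_preimage (t := {0}) (hf.sub continuousOn_id)
      isClosed_singleton).exists_isGreatest ⟨z, ⟨le_rfl, hzc⟩, by simp [hfz]⟩
  have hfr : f r = r := sub_eq_zero.1 hfr
  refine ⟨r, ⟨hr.1, hr.2.lt_of_ne (by rintro rfl; exact hfc.ne' hfr)⟩, hfr, fun t ht => ?_⟩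
  by_contra! hft
  obtain ⟨w, hw, hfw⟩ := exists_mem_uIcc_isFixedPt
    (hf.mono (by rw [uIcc_of_ge ht.2]; exact Icc_subset_Icc (hr.1.trans ht.1.le) le_rfl))
    hfc.le hft
  rw [uIcc_of_ge ht.2] at hw
  have := hr_max ⟨⟨hr.1.trans (ht.1.le.trans hw.1), hw.2⟩, sub_eq_zero.2 hfw⟩
  linarith [ht.1, hw.1]

theorem OmegaLimitPt.exists_map_le {c z r B : ℝ} (homega : OmegaLimitPt f c z) (hzr : z ≤ r)
    (hrc : r < c) (hcB : c ≤ B) (hf : ContinuousOn f (Icc c B))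
    (hid : ∀ t ∈ Ioc r c, t < f t) (horb : ∀ n, f^[n] c ≤ B) : ∃ t ∈ Icc c B, f t ≤ r := by
  by_contra! hgt
  have horb_gt : ∀ n, r < f^[n] c := by
    intro n
    induction n with
    | zero => exact hrc
    | succ n ih =>
      rw [iterate_succ_apply']
      rcases le_or_gt (f^[n] c) c with h | h
      · exact ih.trans (hid _ ⟨ih, h⟩)
      · exact hgt _ ⟨h.le, horb n⟩
  obtain ⟨w, hw, hw_min⟩ := isCompact_Icc.exists_isMinOn ⟨c, le_rfl, hcB⟩ hf
  obtain ⟨n, hn⟩ := (homega.frequently_lt (hzr.trans_lt (hgt w hw))).exists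
  obtain ⟨m, hm, hnm⟩ := ((homega.frequently_lt (hzr.trans_lt (horb_gt n))).and_eventually
    (eventually_gt_atTop n)).exists
  -- the orbit drops below its value at time `n` from some point `f^[k] c`, which
  -- lies to the right of `c` as `f` moves points of `(r, c]` to the right
  obtain ⟨k, -, hk, hk1⟩ := Nat.exists_ge_and_not_succ (P := fun j => f^[n] c ≤ f^[j] c)
    hnm.le le_rfl hm.not_ge
  simp only [not_le, iterate_succ_apply'] at hk hk1
  have hck : c < f^[k] c := by
    by_contra! h
    exact (hid _ ⟨horb_gt k, h⟩).not_gt (hk1.trans_le hk)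
  have : f w ≤ f (f^[k] c) := hw_min ⟨hck.le, horb k⟩
  linarith

theorem exists_first_map_le {c b r t : ℝ} (hf : ContinuousOn f (Icc c b)) (ht : t ∈ Icc c b)
    (hft : f t ≤ r) (hfc : r < f c) : ∃ d ∈ Ioc c b, f d ≤ r ∧ ∀ s ∈ Ico c d, r < f s := by
  obtain ⟨d, ⟨hd, hfd⟩, hd_min⟩ :=
    (isCompact_Icc_inter_preimage hf isClosed_Iic).exists_isLeast ⟨t, ht, hft⟩
  refine ⟨d, ⟨hd.1.lt_of_ne ?_, hd.2⟩, hfd, fun s hs => ?_⟩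
  · rintro rfl; exact hfc.not_ge hfd
  · by_contra! h; exact (hd_min ⟨⟨hs.1, hs.2.le.trans hd.2⟩, h⟩).not_gt hs.2

theorem exists_turbulent_triple {a b z c : ℝ} (hf : ContinuousOn f (Icc a b))
    (hmaps : MapsTo f (Icc a b) (Icc a b)) (hz : z ∈ Icc a b) (hfz : f z = z)
    (hc : c ∈ Icc a b) (hzc : z < c) (hfc : c < f c) (homega : OmegaLimitPt f c z) :
    ∃ r e d, a ≤ r ∧ r < e ∧ e < d ∧ d ≤ b ∧ f r = r ∧ d ≤ f e ∧ f d ≤ r := by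
  obtain ⟨r, hr, hfr, hid⟩ :=
    exists_greatest_fixedPt (hf.mono (Icc_subset_Icc hz.1 hc.2)) hzc.le hfz hfc
  have hcb : ContinuousOn f (Icc c b) := hf.mono (Icc_subset_Icc hc.1 le_rfl)
  obtain ⟨t, ht, hft⟩ :=
    homega.exists_map_le hr.1 hr.2 hc.2 hcb hid fun n => (hmaps.iterate n hc).2
  obtain ⟨d, hd, hfd, hd_gt⟩ := exists_first_map_le hcb ht hft (hr.2.trans hfc)
  have hrd : Icc r d ⊆ Icc a b := Icc_subset_Icc (hz.1.trans hr.1) hd.2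
  obtain ⟨e, he, he_max⟩ :=
    isCompact_Icc.exists_isMaxOn ⟨r, le_rfl, hr.2.le.trans hd.1.le⟩ (hf.mono hrd)
  have he_max' : ∀ x ∈ Icc r d, f x ≤ f e := he_max
  have hce : c ≤ f e := hfc.le.trans (he_max' c ⟨hr.2.le, hd.1.le⟩)
  have hde : d ≤ f e := by
    by_contra! hed
    have hinv : MapsTo f (Icc r (f e)) (Icc r (f e)) := by
      intro x hx
      refine ⟨?_, he_max' x ⟨hx.1, hx.2.trans hed.le⟩⟩
      rcases hx.1.eq_or_lt with rfl | hrx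
      · exact hfr.ge
      rcases le_or_gt x c with hxc | hcx
      · exact hrx.le.trans (hid x ⟨hrx, hxc⟩).le
      · exact (hd_gt x ⟨hcx.le, hx.2.trans_lt hed⟩).le
    obtain ⟨s, hs, hfs⟩ := homega.exists_map_le hr.1 hr.2 hce
      (hf.mono (Icc_subset_Icc hc.1 (hmaps (hrd he)).2)) hid
      fun n => (hinv.iterate n ⟨hr.2.le, hce⟩).2
    exact (hd_gt s ⟨hs.1, hs.2.trans_lt hed⟩).not_ge hfs
  refine ⟨r, e, d, hz.1.trans hr.1, he.1.lt_of_ne ?_, he.2.lt_of_ne ?_, hd.2, hfr, hde, hfd⟩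
  · rintro rfl; linarith [hd.1, hr.2]
  · rintro rfl; linarith [hd.1, hr.2]

theorem turbulentOn_and_periodicPts_of_lt {a b z c : ℝ} (hf : ContinuousOn f (Icc a b))
    (hmaps : MapsTo f (Icc a b) (Icc a b)) (hz : z ∈ Icc a b) (hfz : f z = z)
    (hc : c ∈ Icc a b) (hzc : z < c) (hfc : c < f c) (homega : OmegaLimitPt f c z) :
    TurbulentOn f (Icc a b) ∧ ∀ m : ℕ, 1 ≤ m → ∃ y ∈ Icc a b, PeriodicPtOfPeriod f m y := by
  obtain ⟨r, e, d, har, hre, hed, hdb, hfr, hfe, hfd⟩ :=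
    exists_turbulent_triple hf hmaps hz hfz hc hzc hfc homega
  have hsub : Icc r d ⊆ Icc a b := Icc_subset_Icc har hdb
  have h₀ : Icc r d ⊆ f '' Icc r e := (Icc_subset_Icc hfr.le hfe).trans
    (intermediate_value_Icc hre.le (hf.mono ((Icc_subset_Icc_right hed.le).trans hsub)))
  have h₁ : Icc r d ⊆ f '' Icc e d := (Icc_subset_Icc hfd hfe).trans
    (intermediate_value_Icc' hed.le (hf.mono ((Icc_subset_Icc_left hre.le).trans hsub)))
  refine ⟨turbulentOn_of_covers hsub hre.le hed.le h₀ h₁, fun m _ => ?_⟩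
  obtain ⟨y, hy, hper⟩ := exists_periodicPtOfPeriod_of_covers hf hmaps hsub hre.le hed.le
    (hed.trans_le hfe) h₀ h₁ m
  exact ⟨y, hsub ⟨hre.le.trans hy.1, hy.2⟩, hper⟩

theorem TurbulentOn.of_semiconj_neg {g : ℝ → ℝ} {a b : ℝ} (hgf : Semiconj Neg.neg g f)
    (h : TurbulentOn g (Icc (-b) (-a))) : TurbulentOn f (Icc a b) := by
  have hneg : ∀ {J}, IsCompactSubinterval J (Icc (-b) (-a)) →
      IsCompactSubinterval (Neg.neg '' J) (Icc a b) := by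
    rintro _ ⟨hJ, p, q, hpq, rfl⟩
    refine ⟨?_, -q, -p, neg_le_neg hpq, image_neg_Icc p q⟩
    simpa only [image_neg_Icc, neg_neg] using image_mono (f := Neg.neg) hJ
  obtain ⟨J₀, J₁, h₀, h₁, hsing, hcov⟩ := h
  refine ⟨_, _, hneg h₀, hneg h₁, ?_, ?_⟩
  · rw [← image_inter neg_injective]; exact hsing.image _
  · rw [← image_union, ← hgf.set_image J₀, ← hgf.set_image J₁]
    exact (image_mono hcov).trans (image_inter_subset _ _ _)

theorem turbulentOn_and_periodicPts_of_gt {a b z c : ℝ} (hf : ContinuousOn f (Icc a b))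
    (hmaps : MapsTo f (Icc a b) (Icc a b)) (hz : z ∈ Icc a b) (hfz : f z = z)
    (hc : c ∈ Icc a b) (hcz : c < z) (hfc : f c < c) (homega : OmegaLimitPt f c z) :
    TurbulentOn f (Icc a b) ∧ ∀ m : ℕ, 1 ≤ m → ∃ y ∈ Icc a b, PeriodicPtOfPeriod f m y := by
  set g : ℝ → ℝ := fun x => -f (-x)
  have hfg : Semiconj Neg.neg f g := fun x => by simp [g]
  have hgf : Semiconj Neg.neg g f := fun x => by simp [g]
  have hneg : MapsTo Neg.neg (Icc (-b) (-a)) (Icc a b) := fun x hx => neg_mem_Icc_iff.2 hx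
  obtain ⟨hturb, hper⟩ := turbulentOn_and_periodicPts_of_lt (f := g)
    (hf.comp continuous_neg.continuousOn hneg).neg
    (fun x hx => neg_mem_Icc_iff.2 (by simpa using hmaps (hneg hx)))
    (neg_mem_Icc_iff.2 (by simpa using hz)) (by simp [g, hfz])
    (neg_mem_Icc_iff.2 (by simpa using hc)) (neg_lt_neg hcz) (by simp [g, hfc])
    (homega.of_semiconj hfg continuous_neg)
  refine ⟨hturb.of_semiconj_neg hgf, fun m hm => ?_⟩
  obtain ⟨y, hy, hper⟩ := hper m hm
  exact ⟨-y, neg_mem_Icc_iff.2 (by simpa using hy), hper.of_semiconj hgf neg_injective⟩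

end

theorem stmt_13_general (a b : ℝ) (f : ℝ → ℝ)
    (hf : ContinuousOn f (Set.Icc a b)) (hmaps : Set.MapsTo f (Set.Icc a b) (Set.Icc a b))
    (z : ℝ) (hz : z ∈ Set.Icc a b) (hfz : f z = z)
    (c : ℝ) (hc : c ∈ Set.Icc a b) (hcz : c ≠ z)
    (hslope : (f c - z) / (c - z) > 1) (homega : OmegaLimitPt f c z) :
    TurbulentOn f (Set.Icc a b) ∧
      ∀ m : ℕ, 1 ≤ m → ∃ y ∈ Set.Icc a b, PeriodicPtOfPeriod f m y := by
  rcases hcz.lt_or_gt with hcz | hzc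
  · have hfc : f c < c := by
      have := (one_lt_div_of_neg (sub_neg.2 hcz)).1 hslope; linarith
    exact turbulentOn_and_periodicPts_of_gt hf hmaps hz hfz hc hcz hfc homega
  · have hfc : c < f c := by
      have := (one_lt_div (sub_pos.2 hzc)).1 hslope; linarith
    exact turbulentOn_and_periodicPts_of_lt hf hmaps hz hfz hc hzc hfc homega

theorem stmt_13 (a b : ℝ) (hab : a ≤ b) (f : ℝ → ℝ)
    (hf : ContinuousOn f (Set.Icc a b)) (hmaps : Set.MapsTo f (Set.Icc a b) (Set.Icc a b))
    (z : ℝ) (hz : z ∈ Set.Icc a b) (hfz : f z = z)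
    (c : ℝ) (hc : c ∈ Set.Icc a b) (hcz : c ≠ z)
    (hslope : (f c - z) / (c - z) > 1) (homega : OmegaLimitPt f c z) :
    TurbulentOn f (Set.Icc a b) ∧
      ∀ m : ℕ, 1 ≤ m → ∃ y ∈ Set.Icc a b, PeriodicPtOfPeriod f m y :=
  stmt_13_general a b f hf hmaps z hz hfz c hc hcz hslope homega
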